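/- arXiv:1907.04821 — 3 statements merged into one kernel-verified Lean document; each statement's English description precedes it below -/
import Mathlib

section
/- Let a, b be complex numbers with b ≠ 0, and let s be a complex square root of b (s² = b). Let A_n be the n × n tridiagonal matrix whose diagonal entries all equal a, whose subdiagonal entries all equal b, and whose superdiagonal entries all equal 1 (all other entries 0). Then for every complex number x, det(x·I_n − A_n) = s^n · U_n((x − a)/(2s)), where U_n is the degree-n Chebyshev polynomial of the second kind. -/
open Polynomial

private noncomputable def Mtri (c d e : ℂ) (n : ℕ) : Matrix (Fin n) (Fin n) ℂ :=
  Matrix.of fun i j =>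
    if (i : ℕ) = (j : ℕ) then c
    else if (i : ℕ) = (j : ℕ) + 1 then d
    else if (j : ℕ) = (i : ℕ) + 1 then e
    else 0

private lemma Mtri_rec (c d e : ℂ) (n : ℕ) :
    (Mtri c d e (n + 2)).det
      = c * (Mtri c d e (n + 1)).det - d * e * (Mtri c d e n).det := by
  rw [Matrix.det_succ_row_zero, Fin.sum_univ_succ, Fin.sum_univ_succ]
  have h0 : ∀ j : Fin n, Mtri c d e (n + 2) 0 j.succ.succ = 0 := by
    intro j
    simp only [Mtri, Matrix.of_apply, Fin.val_succ, Fin.val_zero]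
    split_ifs <;> first | rfl | omega | exact ‹False›.elim
  have h00 : Mtri c d e (n + 2) 0 0 = c := by simp [Mtri]
  have h01 : Mtri c d e (n + 2) 0 (0 : Fin (n+1)).succ = e := by
    simp only [Mtri, Matrix.of_apply, Fin.val_succ, Fin.val_zero]
    norm_num
  simp only [h0, mul_zero, zero_mul, Finset.sum_const_zero, add_zero, h00, h01]
  have hA : (Mtri c d e (n + 2)).submatrix Fin.succ (Fin.succAbove 0) = Mtri c d e (n + 1) := by
    ext i j
    simp only [Matrix.submatrix_apply, Fin.succAbove_zero, Mtri, Matrix.of_apply, Fin.val_succ]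
    split_ifs <;> first | rfl | omega | exact ‹False›.elim
  set P := (Mtri c d e (n + 2)).submatrix Fin.succ ((0 : Fin (n+1)).succ).succAbove with hPdef
  have hP : P.det = d * (Mtri c d e n).det := by
    rw [Matrix.det_succ_column_zero, Fin.sum_univ_succ]
    have hc0 : ∀ i : Fin n, P i.succ 0 = 0 := by
      intro i
      simp only [hPdef, Matrix.submatrix_apply, Fin.succ_succAbove_zero, Mtri, Matrix.of_apply,
        Fin.val_succ, Fin.val_zero]
      split_ifs <;> first | rfl | omega | exact ‹False›.elim
    have hc00 : P 0 0 = d := by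
      simp only [hPdef, Matrix.submatrix_apply, Fin.succ_succAbove_zero, Mtri, Matrix.of_apply,
        Fin.val_succ, Fin.val_zero]
      norm_num
    simp only [hc0, mul_zero, zero_mul, Finset.sum_const_zero, add_zero, hc00]
    have hmin : P.submatrix (Fin.succAbove (0 : Fin (n+1))) Fin.succ = Mtri c d e n := by
      ext i j
      simp only [hPdef, Matrix.submatrix_apply, Fin.succAbove_zero, Fin.succ_succAbove_succ,
        Fin.zero_succAbove, Mtri, Matrix.of_apply, Fin.val_succ]
      split_ifs <;> first | rfl | omega | exact ‹False›.elim
    rw [hmin]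
    norm_num
  rw [hA, hP]
  norm_num [Fin.val_succ]
  ring

/-- For the `n × n` tridiagonal matrix `A` with diagonal entries `a`, subdiagonal
entries `b ≠ 0` and superdiagonal entries `1`, and `s` a square root of `b`, the
characteristic polynomial satisfies
`det (x • I − A) = s ^ n * U_n ((x − a) / (2 s))`. -/
theorem charpoly_tridiagonal_eq_chebyshevU (n : ℕ) (a b s : ℂ) (hb : b ≠ 0)
    (hs : s ^ 2 = b) (x : ℂ) :
    (x • (1 : Matrix (Fin n) (Fin n) ℂ) -
        Matrix.of fun i j : Fin n =>
          if (i : ℕ) = (j : ℕ) then a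
          else if (i : ℕ) = (j : ℕ) + 1 then b
          else if (j : ℕ) = (i : ℕ) + 1 then 1
          else 0).det
      = s ^ n * (Polynomial.Chebyshev.U ℂ n).eval ((x - a) / (2 * s)) := by
  have hs0 : s ≠ 0 := by
    intro h; apply hb; rw [← hs, h]; ring
  have hM : (x • (1 : Matrix (Fin n) (Fin n) ℂ) -
        Matrix.of fun i j : Fin n =>
          if (i : ℕ) = (j : ℕ) then a
          else if (i : ℕ) = (j : ℕ) + 1 then b
          else if (j : ℕ) = (i : ℕ) + 1 then 1
          else 0) = Mtri (x - a) (-b) (-1) n := by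
    ext i j
    simp only [Matrix.sub_apply, Matrix.smul_apply, Matrix.one_apply, Matrix.of_apply, Mtri,
      smul_eq_mul, Fin.ext_iff]
    split_ifs <;> first | ring | omega | exact ‹False›.elim
  rw [hM]
  have key : ∀ m : ℕ, (Mtri (x - a) (-b) (-1) m).det
      = s ^ m * (Polynomial.Chebyshev.U ℂ m).eval ((x - a) / (2 * s)) := by
    intro m
    induction m using Nat.twoStepInduction with
    | zero => simp [Polynomial.Chebyshev.U_zero]
    | one =>
      rw [Matrix.det_fin_one]
      simp only [Nat.cast_one, Polynomial.Chebyshev.U_one, Mtri, Matrix.of_apply, Fin.val_zero,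
        if_true, eval_mul, eval_ofNat, eval_X, pow_one]
      field_simp
    | more m ih1 ih2 =>
      rw [Mtri_rec, ih1, ih2]
      have hU := Polynomial.Chebyshev.U_add_two ℂ (m : ℤ)
      rw [show ((m + 2 : ℕ) : ℤ) = (m : ℤ) + 2 by push_cast; ring, hU]
      simp only [eval_sub, eval_mul, eval_ofNat, eval_X]
      field_simp
      rw [← hs]
      push_cast
      ring
  exact key n
end

section
/- Let d ≥ 5 be an integer and k ≥ 2 a real number, and let B be the (d+1) × (d+1) real matrix with rows and columns indexed by 0,…,d defined by: B(0,0) = 0, B(0,1) = 1; B(1,0) = k, B(1,1) = (3k−6)/4, B(1,2) = (k+2)/4; for 2 ≤ i ≤ d−1: B(i,i−1) = (k+2)/4, B(i,i) = (k−2)/2, B(i,i+1) = (k+2)/4; B(d,d−1) = (k+2)/4, B(d,d) = (3k−2)/4; and all other entries 0. Then for every eigenvalue λ of B there exists a real number θ such that λ = ((k+2)/2)·cos θ + (k−2)/2 and (k+2)·sin((d+2)θ) − 4·sin((d+1)θ) − 2k·sin(dθ) + 4·sin((d−1)θ) + (k−2)·sin((d−2)θ) = 0. -/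
open Polynomial

/-- The first intersection matrix of a homogeneous monotonic P-polynomial table
algebra of dimension `d + 1` with valency `k` and `α = (3k − 6)/4`. -/
noncomputable def firstIntersectionMatrix (d : ℕ) (k : ℝ) :
    Matrix (Fin (d + 1)) (Fin (d + 1)) ℝ :=
  Matrix.of fun i j : Fin (d + 1) =>
    if (i : ℕ) = 0 then (if (j : ℕ) = 1 then 1 else 0)
    else if (i : ℕ) = 1 then
      (if (j : ℕ) = 0 then k
       else if (j : ℕ) = 1 then (3 * k - 6) / 4
       else if (j : ℕ) = 2 then (k + 2) / 4
       else 0)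
    else if (i : ℕ) = d then
      (if (j : ℕ) = d - 1 then (k + 2) / 4
       else if (j : ℕ) = d then (3 * k - 2) / 4
       else 0)
    else
      (if (j : ℕ) + 1 = (i : ℕ) then (k + 2) / 4
       else if (j : ℕ) = (i : ℕ) then (k - 2) / 2
       else if (j : ℕ) = (i : ℕ) + 1 then (k + 2) / 4
       else 0)


/-- Sum of an indicator-style function over `Fin N`. -/
private lemma sum_ite_coe {N : ℕ} (p : ℕ) (hp : p < N) (x : Fin N → ℝ) :
    (∑ j : Fin N, if (j : ℕ) = p then x j else 0) = x ⟨p, hp⟩ := by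
  have h : ∀ j : Fin N, (if (j : ℕ) = p then x j else 0)
      = if j = (⟨p, hp⟩ : Fin N) then x j else 0 := by
    intro j; simp [Fin.ext_iff]
  rw [Finset.sum_congr rfl (fun j _ => h j), Finset.sum_ite_eq' Finset.univ]
  simp

/-- Abstract growth lemma: a sequence beginning at a positive value, initially
nondecreasing and satisfying a three-term recurrence with dominant middle
coefficient cannot satisfy the final boundary condition. -/
private lemma growth_contradiction (d : ℕ) (hd : 5 ≤ d) (V : ℕ → ℝ) (c β' : ℝ)
    (hc : 0 < c) (h0 : 0 < V 0) (h01 : V 0 ≤ V 1) (h12 : V 1 ≤ V 2)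
    (hi : ∀ m : ℕ, m + 2 < d → ∃ q : ℝ, 2 * c < q ∧
      c * V (m + 3) = q * V (m + 2) - c * V (m + 1))
    (hfin : c * V (d - 1) = β' * V d) (hβ : c < β') : False := by
  have claim : ∀ n, n < d → 0 < V n ∧ V n ≤ V (n + 1) := by
    intro n
    induction n with
    | zero => intro _; exact ⟨h0, h01⟩
    | succ m ih =>
      intro hm
      have hQ := ih (by omega)
      refine ⟨lt_of_lt_of_le hQ.1 hQ.2, ?_⟩
      rcases Nat.eq_zero_or_pos m with hm0 | hm1
      · subst hm0; exact h12
      · obtain ⟨m', rfl⟩ : ∃ m', m = m' + 1 := ⟨m - 1, by omega⟩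
        obtain ⟨q, hq, hrec⟩ := hi m' (by omega)
        have hpos : 0 < V (m' + 2) := lt_of_lt_of_le hQ.1 hQ.2
        have h2' : V (m' + 1) ≤ V (m' + 2) := hQ.2
        show V (m' + 2) ≤ V (m' + 3)
        nlinarith [mul_pos hc hpos, mul_le_mul_of_nonneg_left h2' (le_of_lt hc)]
  have hQd := claim (d - 1) (by omega)
  have hd1 : d - 1 + 1 = d := by omega
  rw [hd1] at hQd
  nlinarith [hQd.1, hQd.2, mul_le_mul_of_nonneg_left hQd.2 (le_of_lt hc)]

/-- Three-term sine recurrence. -/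
private lemma sin_step (m θ : ℝ) :
    Real.sin ((m + 1) * θ) = 2 * Real.cos θ * Real.sin (m * θ) - Real.sin ((m - 1) * θ) := by
  rw [show (m + 1) * θ = m * θ + θ by ring, show (m - 1) * θ = m * θ - θ by ring,
    Real.sin_add, Real.sin_sub]
  ring

/-- Closed form for the eigenvector entries in the "interior" range. -/
private lemma closed_form (d : ℕ) (V : ℕ → ℝ) (c b lam θ : ℝ) (hc : c ≠ 0)
    (hcos : lam = 2 * c * Real.cos θ + b)
    (hi : ∀ m : ℕ, m + 2 < d →
      c * V (m + 1) + b * V (m + 2) + c * V (m + 3) = lam * V (m + 2)) :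
    ∀ n : ℕ, n + 2 ≤ d →
      (Real.sin θ * V (n + 1)
          = V 2 * Real.sin ((n : ℝ) * θ) - V 1 * Real.sin (((n : ℝ) - 1) * θ)) ∧
      (Real.sin θ * V (n + 2)
          = V 2 * Real.sin (((n : ℝ) + 1) * θ) - V 1 * Real.sin ((n : ℝ) * θ)) := by
  intro n
  induction n with
  | zero =>
    intro _
    constructor
    · rw [show ((0 : ℕ) : ℝ) * θ = 0 * θ by norm_num]
      rw [show (((0 : ℕ) : ℝ) - 1) * θ = -θ by push_cast; ring]
      simp [Real.sin_neg]; ring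
    · rw [show (((0 : ℕ) : ℝ) + 1) * θ = 1 * θ by push_cast; ring]
      rw [show ((0 : ℕ) : ℝ) * θ = 0 * θ by norm_num]
      simp; ring
  | succ m ih =>
    intro hm
    have IH := ih (by omega)
    constructor
    · have := IH.2
      push_cast
      convert this using 3 <;> push_cast <;> ring
    · have hrec := hi m (by omega)
      have h3 : V (m + 3) = 2 * Real.cos θ * V (m + 2) - V (m + 1) := by
        apply mul_left_cancel₀ hc
        linear_combination hrec + V (m + 2) * hcos
      have t1 := sin_step ((m : ℝ) + 1) θ
      rw [show ((m : ℝ) + 1 - 1) * θ = (m : ℝ) * θ by ring] at t1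
      have t2 := sin_step ((m : ℝ)) θ
      rw [show (m : ℕ) + 1 + 2 = m + 3 by omega, h3]
      push_cast
      push_cast at t1 t2 IH
      linear_combination 2 * Real.cos θ * IH.2 - IH.1 - V 2 * t1 + V 1 * t2


/-- Sum over `Fin N` of a two-indicator function. -/
private lemma sum_two {N : ℕ} (p q : ℕ) (hp : p < N) (hq : q < N)
    (a b : ℝ) (v : Fin N → ℝ) (F : Fin N → ℝ)
    (hF : ∀ j, F j = (if (j : ℕ) = p then a * v j else 0)
      + (if (j : ℕ) = q then b * v j else 0)) :
    ∑ j, F j = a * v ⟨p, hp⟩ + b * v ⟨q, hq⟩ := by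
  rw [Finset.sum_congr rfl (fun j _ => hF j), Finset.sum_add_distrib,
    sum_ite_coe p hp, sum_ite_coe q hq]

/-- Sum over `Fin N` of a three-indicator function. -/
private lemma sum_three {N : ℕ} (p q r : ℕ) (hp : p < N) (hq : q < N) (hr : r < N)
    (a b c : ℝ) (v : Fin N → ℝ) (F : Fin N → ℝ)
    (hF : ∀ j, F j = (if (j : ℕ) = p then a * v j else 0)
      + (if (j : ℕ) = q then b * v j else 0) + (if (j : ℕ) = r then c * v j else 0)) :
    ∑ j, F j = a * v ⟨p, hp⟩ + b * v ⟨q, hq⟩ + c * v ⟨r, hr⟩ := by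
  rw [Finset.sum_congr rfl (fun j _ => hF j), Finset.sum_add_distrib, Finset.sum_add_distrib,
    sum_ite_coe p hp, sum_ite_coe q hq, sum_ite_coe r hr]

set_option maxHeartbeats 2000000 in
/-- Every eigenvalue `λ` of the first intersection matrix is of the form
`((k+2)/2) cos θ + (k−2)/2` where `θ` is a root of the trigonometric equation
`(k+2) sin((d+2)θ) − 4 sin((d+1)θ) − 2k sin(dθ) + 4 sin((d−1)θ) + (k−2) sin((d−2)θ) = 0`. -/
theorem eigenvalues_firstIntersectionMatrix (d : ℕ) (hd : 5 ≤ d) (k : ℝ) (hk : 2 ≤ k)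
    (lam : ℝ) (hlam : (firstIntersectionMatrix d k).charpoly.IsRoot lam) :
    ∃ θ : ℝ, lam = (k + 2) / 2 * Real.cos θ + (k - 2) / 2 ∧
      (k + 2) * Real.sin ((d + 2) * θ) - 4 * Real.sin ((d + 1) * θ)
        - 2 * k * Real.sin (d * θ) + 4 * Real.sin ((d - 1) * θ)
        + (k - 2) * Real.sin ((d - 2) * θ) = 0 := by
  classical
  -- obtain an eigenvector
  obtain ⟨v, hv0, hBv⟩ : ∃ v : Fin (d + 1) → ℝ, v ≠ 0 ∧
      (firstIntersectionMatrix d k).mulVec v = lam • v := by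
    set B := firstIntersectionMatrix d k with hB
    have hdet : (lam • (1 : Matrix (Fin (d + 1)) (Fin (d + 1)) ℝ) - B).det = 0 := by
      have h1 : (Polynomial.evalRingHom lam).mapMatrix (Matrix.charmatrix B) =
          lam • (1 : Matrix (Fin (d + 1)) (Fin (d + 1)) ℝ) - B := by
        ext i j
        by_cases hij : i = j <;>
          simp [hij, Matrix.charmatrix_apply, Matrix.one_apply, Matrix.diagonal_apply]
      have h2 := (RingHom.map_det (Polynomial.evalRingHom lam) (Matrix.charmatrix B))
      rw [h1] at h2
      rw [← h2]
      simpa [Matrix.charpoly] using hlam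
    obtain ⟨w, hw0, hw⟩ := (Matrix.exists_mulVec_eq_zero_iff).mpr hdet
    refine ⟨w, hw0, ?_⟩
    rw [Matrix.sub_mulVec, Matrix.smul_mulVec, Matrix.one_mulVec, sub_eq_zero] at hw
    exact hw.symm
  have hc : (0:ℝ) < (k + 2) / 4 := by linarith
  set V : ℕ → ℝ := fun n => if h : n < d + 1 then v ⟨n, h⟩ else 0 with hVdef
  have hVv : ∀ (n : ℕ) (h : n < d + 1), V n = v ⟨n, h⟩ := by
    intro n h; simp [hVdef, h, (by omega : n ≤ d)]
  have hrow : ∀ i : Fin (d + 1), ∑ j, firstIntersectionMatrix d k i j * v j = lam * v i := by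
    intro i
    have h := congrFun hBv i
    simpa [Matrix.mulVec, dotProduct] using h
  -- equation from row 0
  have e0 : V 1 = lam * V 0 := by
    have hlt : (0:ℕ) < d + 1 := by omega
    have h := hrow ⟨0, hlt⟩
    have hval : ((⟨0, hlt⟩ : Fin (d + 1)) : ℕ) = 0 := rfl
    have hsum : ∑ j, firstIntersectionMatrix d k ⟨0, hlt⟩ j * v j = v ⟨1, by omega⟩ := by
      rw [Finset.sum_congr rfl (fun j _ => show firstIntersectionMatrix d k ⟨0, hlt⟩ j * v j
          = if (j : ℕ) = 1 then v j else 0 by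
        simp only [firstIntersectionMatrix, Matrix.of_apply, hval]
        split_ifs <;> first | ring1 | exact ‹False›.elim | (exfalso; omega))]
      exact sum_ite_coe 1 (by omega) v
    rw [hsum] at h
    rw [hVv 1 (by omega), hVv 0 (by omega)]
    exact h
  -- equation from row 1
  have he1 : k * V 0 + (3 * k - 6) / 4 * V 1 + (k + 2) / 4 * V 2 = lam * V 1 := by
    have hlt : (1:ℕ) < d + 1 := by omega
    have h := hrow ⟨1, hlt⟩
    have hval : ((⟨1, hlt⟩ : Fin (d + 1)) : ℕ) = 1 := rfl
    rw [sum_three 0 1 2 (by omega) (by omega) (by omega) k ((3 * k - 6) / 4) ((k + 2) / 4) v _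
      (fun j => by
        simp only [firstIntersectionMatrix, Matrix.of_apply, hval]
        split_ifs <;> first | ring1 | exact ‹False›.elim | (exfalso; omega))] at h
    rw [hVv 0 (by omega), hVv 1 (by omega), hVv 2 (by omega)]
    exact h
  -- interior equations
  have his : ∀ m : ℕ, m + 2 < d →
      (k + 2) / 4 * V (m + 1) + (k - 2) / 2 * V (m + 2) + (k + 2) / 4 * V (m + 3)
        = lam * V (m + 2) := by
    intro m hm
    have hlt : m + 2 < d + 1 := by omega
    have h := hrow ⟨m + 2, hlt⟩
    have hval : ((⟨m + 2, hlt⟩ : Fin (d + 1)) : ℕ) = m + 2 := rfl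
    rw [sum_three (m + 1) (m + 2) (m + 3) (by omega) (by omega) (by omega)
      ((k + 2) / 4) ((k - 2) / 2) ((k + 2) / 4) v _
      (fun j => by
        simp only [firstIntersectionMatrix, Matrix.of_apply, hval]
        split_ifs <;> first | ring1 | exact ‹False›.elim | (exfalso; omega))] at h
    rw [hVv (m + 1) (by omega), hVv (m + 2) (by omega), hVv (m + 3) (by omega)]
    exact h
  -- equation from the last row
  have hed : (k + 2) / 4 * V (d - 1) + (3 * k - 2) / 4 * V d = lam * V d := by
    have hlt : d < d + 1 := by omega
    have h := hrow ⟨d, hlt⟩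
    have hval : ((⟨d, hlt⟩ : Fin (d + 1)) : ℕ) = d := rfl
    rw [sum_two (d - 1) d (by omega) (by omega) ((k + 2) / 4) ((3 * k - 2) / 4) v _
      (fun j => by
        simp only [firstIntersectionMatrix, Matrix.of_apply, hval]
        split_ifs <;> first | ring1 | exact ‹False›.elim | (exfalso; omega))] at h
    rw [hVv (d - 1) (by omega), hVv d (by omega)]
    exact h
  -- the first entry of the eigenvector is nonzero
  have hV0 : V 0 ≠ 0 := by
    intro h0
    apply hv0
    have hz : ∀ n, n ≤ d → V n = 0 := by
      intro n
      induction n using Nat.strong_induction_on with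
      | _ n ih =>
        intro hn
        match n with
        | 0 => exact h0
        | 1 => rw [e0, h0]; ring
        | 2 =>
          have h1 : V 1 = 0 := ih 1 (by omega) (by omega)
          have hne : (k + 2) / 4 ≠ 0 := ne_of_gt hc
          field_simp at he1
          have := he1
          rw [h0, h1] at this
          have h2 : (k + 2) * V 2 = 0 := by linarith
          have : V 2 = 0 := by
            rcases mul_eq_zero.mp h2 with h | h
            · linarith
            · exact h
          exact this
        | (m + 3) =>
          have h1 : V (m + 1) = 0 := ih (m + 1) (by omega) (by omega)
          have h2 : V (m + 2) = 0 := ih (m + 2) (by omega) (by omega)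
          have h := his m (by omega)
          rw [h1, h2] at h
          have h3 : (k + 2) / 4 * V (m + 3) = 0 := by linarith
          rcases mul_eq_zero.mp h3 with h | h
          · linarith
          · exact h
    funext i
    have : V (i : ℕ) = 0 := hz i (by omega)
    rw [hVv (i : ℕ) (by omega)] at this
    simpa using this
  -- eigenvalue upper bound
  have hub : lam ≤ k := by
    by_contra hcon
    push_neg at hcon
    obtain ⟨ε, hε1, hεpos⟩ : ∃ ε : ℝ, (ε = 1 ∨ ε = -1) ∧ 0 < ε * V 0 := by
      rcases hV0.lt_or_gt with h | h
      · exact ⟨-1, Or.inr rfl, by linarith⟩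
      · exact ⟨1, Or.inl rfl, by linarith⟩
    refine growth_contradiction d hd (fun n => ε * V n) ((k + 2) / 4) (lam - (3 * k - 2) / 4)
      hc hεpos ?_ ?_ ?_ ?_ (by linarith)
    · show ε * V 0 ≤ ε * V 1
      have h1 : ε * V 1 = lam * (ε * V 0) := by rw [e0]; ring
      rw [h1]
      nlinarith
    · show ε * V 1 ≤ ε * V 2
      have h1 : ε * V 1 = lam * (ε * V 0) := by rw [e0]; ring
      have h2 : (k + 2) / 4 * (ε * V 2 - ε * V 1) = ((lam - k + 1) * lam - k) * (ε * V 0) := by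
        linear_combination ε * he1 + (ε * (lam - k + 1)) * e0
      nlinarith [mul_pos (show (0:ℝ) < lam - k by linarith) (show (0:ℝ) < lam + 1 by linarith),
        mul_pos (mul_pos (show (0:ℝ) < lam - k by linarith)
          (show (0:ℝ) < lam + 1 by linarith)) hεpos]
    · intro m hm
      refine ⟨lam - (k - 2) / 2, by linarith, ?_⟩
      show (k + 2) / 4 * (ε * V (m + 3)) = (lam - (k - 2) / 2) * (ε * V (m + 2))
        - (k + 2) / 4 * (ε * V (m + 1))
      linear_combination ε * his m hm
    · show (k + 2) / 4 * (ε * V (d - 1)) = (lam - (3 * k - 2) / 4) * (ε * V d)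
      linear_combination ε * hed
  -- eigenvalue lower bound
  have hlb : -2 ≤ lam := by
    by_contra hcon
    push_neg at hcon
    obtain ⟨ε, hε1, hεpos⟩ : ∃ ε : ℝ, (ε = 1 ∨ ε = -1) ∧ 0 < ε * V 0 := by
      rcases hV0.lt_or_gt with h | h
      · exact ⟨-1, Or.inr rfl, by linarith⟩
      · exact ⟨1, Or.inl rfl, by linarith⟩
    obtain ⟨e, rfl⟩ : ∃ e, d = e + 5 := ⟨d - 5, by omega⟩
    have hed' : (k + 2) / 4 * V (e + 4) + (3 * k - 2) / 4 * V (e + 5) = lam * V (e + 5) := by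
      rw [show e + 4 = e + 5 - 1 by omega]; exact hed
    refine growth_contradiction (e + 5) (by omega) (fun n => ε * (-1 : ℝ) ^ n * V n)
      ((k + 2) / 4) ((3 * k - 2) / 4 - lam) hc (by simpa using hεpos) ?_ ?_ ?_ ?_ (by linarith)
    · show ε * (-1 : ℝ) ^ 0 * V 0 ≤ ε * (-1 : ℝ) ^ 1 * V 1
      have h1 : ε * (-1 : ℝ) ^ 1 * V 1 = (-lam) * (ε * V 0) := by rw [e0]; ring
      rw [h1]
      nlinarith
    · show ε * (-1 : ℝ) ^ 1 * V 1 ≤ ε * (-1 : ℝ) ^ 2 * V 2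
      have h2 : (k + 2) / 4 * (ε * (-1 : ℝ) ^ 2 * V 2 - ε * (-1 : ℝ) ^ 1 * V 1)
          = ((k / 2 - lam) * (-2 - lam)) * (ε * V 0) := by
        linear_combination ε * he1 + (ε * (lam - k / 2 + 2)) * e0
      nlinarith [mul_pos (show (0:ℝ) < k / 2 - lam by linarith)
          (show (0:ℝ) < -2 - lam by linarith),
        mul_pos (mul_pos (show (0:ℝ) < k / 2 - lam by linarith)
          (show (0:ℝ) < -2 - lam by linarith)) hεpos]
    · intro m hm
      refine ⟨(k - 2) / 2 - lam, by linarith, ?_⟩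
      show (k + 2) / 4 * (ε * (-1 : ℝ) ^ (m + 3) * V (m + 3))
        = ((k - 2) / 2 - lam) * (ε * (-1 : ℝ) ^ (m + 2) * V (m + 2))
          - (k + 2) / 4 * (ε * (-1 : ℝ) ^ (m + 1) * V (m + 1))
      linear_combination (ε * (-1 : ℝ) ^ (m + 1)) * his m hm
    · show (k + 2) / 4 * (ε * (-1 : ℝ) ^ (e + 5 - 1) * V (e + 5 - 1))
        = ((3 * k - 2) / 4 - lam) * (ε * (-1 : ℝ) ^ (e + 5) * V (e + 5))
      rw [show e + 5 - 1 = e + 4 by omega]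
      linear_combination (ε * (-1 : ℝ) ^ (e + 4)) * hed'
  -- now −2 ≤ lam ≤ k; define θ
  have hkpos : (0:ℝ) < k + 2 := by linarith
  set x : ℝ := (2 * lam - (k - 2)) / (k + 2) with hxdef
  have hx1 : x ≤ 1 := by rw [hxdef, div_le_one hkpos]; linarith
  have hx2 : -1 ≤ x := by rw [hxdef, le_div_iff₀ hkpos]; linarith
  set θ := Real.arccos x with hθdef
  have hcosθ : Real.cos θ = x := Real.cos_arccos hx2 hx1
  have hlam' : lam = (k + 2) / 2 * Real.cos θ + (k - 2) / 2 := by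
    rw [hcosθ, hxdef]
    field_simp
    ring
  refine ⟨θ, hlam', ?_⟩
  -- closed form for the eigenvector entries
  have hCF := closed_form d V ((k + 2) / 4) ((k - 2) / 2) lam θ (ne_of_gt hc)
    (by rw [hlam']; ring) (fun m hm => his m hm)
  have hG1 := (hCF (d - 2) (by omega)).1
  have hG2 := (hCF (d - 2) (by omega)).2
  rw [show d - 2 + 1 = d - 1 by omega] at hG1
  rw [show d - 2 + 2 = d by omega] at hG2
  have hc2 : ((d - 2 : ℕ) : ℝ) = (d : ℝ) - 2 := by
    rw [Nat.cast_sub (by omega : 2 ≤ d)]; norm_num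
  rw [hc2] at hG1 hG2
  rw [show ((d : ℝ) - 2 - 1) * θ = ((d : ℝ) - 3) * θ by ring] at hG1
  rw [show ((d : ℝ) - 2 + 1) * θ = ((d : ℝ) - 1) * θ by ring] at hG2
  have hH : (k + 2) / 4 * (V 2 * Real.sin (((d : ℝ) - 2) * θ)
        - V 1 * Real.sin (((d : ℝ) - 3) * θ))
      = (lam - (3 * k - 2) / 4) * (V 2 * Real.sin (((d : ℝ) - 1) * θ)
        - V 1 * Real.sin (((d : ℝ) - 2) * θ)) := by
    linear_combination Real.sin θ * hed - (k + 2) / 4 * hG1 + (lam - (3 * k - 2) / 4) * hG2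
  have hv2L : (k + 2) / 4 * V 2 = ((lam - (3 * k - 6) / 4) * lam - k) * V 0 := by
    linear_combination he1 + (lam - (3 * k - 6) / 4) * e0
  have hpy : Real.sin θ ^ 2 + Real.cos θ ^ 2 = 1 := Real.sin_sq_add_cos_sq θ
  -- expansions of the compound sines
  have E2 : Real.sin (((d : ℝ) + 2) * θ)
      = Real.sin ((d : ℝ) * θ) * (2 * Real.cos θ ^ 2 - 1)
        + Real.cos ((d : ℝ) * θ) * (2 * Real.sin θ * Real.cos θ) := by
    rw [show ((d : ℝ) + 2) * θ = (d : ℝ) * θ + 2 * θ by ring, Real.sin_add,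
      Real.sin_two_mul, Real.cos_two_mul]
    try ring
  have E1 : Real.sin (((d : ℝ) + 1) * θ)
      = Real.sin ((d : ℝ) * θ) * Real.cos θ + Real.cos ((d : ℝ) * θ) * Real.sin θ := by
    rw [show ((d : ℝ) + 1) * θ = (d : ℝ) * θ + θ by ring, Real.sin_add]
  have Em1 : Real.sin (((d : ℝ) - 1) * θ)
      = Real.sin ((d : ℝ) * θ) * Real.cos θ - Real.cos ((d : ℝ) * θ) * Real.sin θ := by
    rw [show ((d : ℝ) - 1) * θ = (d : ℝ) * θ - θ by ring, Real.sin_sub]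
  have Em2 : Real.sin (((d : ℝ) - 2) * θ)
      = Real.sin ((d : ℝ) * θ) * (2 * Real.cos θ ^ 2 - 1)
        - Real.cos ((d : ℝ) * θ) * (2 * Real.sin θ * Real.cos θ) := by
    rw [show ((d : ℝ) - 2) * θ = (d : ℝ) * θ - 2 * θ by ring, Real.sin_sub,
      Real.sin_two_mul, Real.cos_two_mul]
    try ring
  have Em3 : Real.sin (((d : ℝ) - 3) * θ)
      = Real.sin ((d : ℝ) * θ) * ((2 * Real.cos θ ^ 2 - 1) * Real.cos θ
          - (2 * Real.sin θ * Real.cos θ) * Real.sin θ)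
        - Real.cos ((d : ℝ) * θ) * ((2 * Real.sin θ * Real.cos θ) * Real.cos θ
          + (2 * Real.cos θ ^ 2 - 1) * Real.sin θ) := by
    rw [show ((d : ℝ) - 3) * θ = (d : ℝ) * θ - (2 * θ + θ) by ring, Real.sin_sub,
      Real.sin_add, Real.cos_add, Real.sin_two_mul, Real.cos_two_mul]
    try ring
  rw [Em1, Em2, Em3] at hH
  rw [E2, E1, Em1, Em2]
  have hkey : ∀ T : ℝ, (k + 2) * V 0 * T = 0 → T = 0 := by
    intro T hT
    rcases mul_eq_zero.mp hT with h | h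
    · rcases mul_eq_zero.mp h with h' | h'
      · linarith
      · exact absurd h' hV0
    · exact h
  apply hkey
  linear_combination ((-16 : ℝ) * (Real.sin ((d:ℝ)*θ)) + (16 : ℝ) * (Real.cos θ) * (Real.sin ((d:ℝ)*θ)) + (-16 : ℝ) * (Real.sin θ) * (Real.cos ((d:ℝ)*θ))) * hv2L + ((8 : ℝ) * (Real.sin ((d:ℝ)*θ)) + (-8 : ℝ) * (Real.cos θ) * (Real.sin ((d:ℝ)*θ)) + (-16 : ℝ) * (Real.cos θ)^2 * (Real.sin ((d:ℝ)*θ)) + (16 : ℝ) * (Real.cos θ)^3 * (Real.sin ((d:ℝ)*θ)) + (-8 : ℝ) * (Real.sin θ) * (Real.cos ((d:ℝ)*θ)) + (16 : ℝ) * (Real.sin θ) * (Real.cos θ) * (Real.cos ((d:ℝ)*θ)) + (16 : ℝ) * (Real.sin θ)^2 * (Real.cos θ) * (Real.sin ((d:ℝ)*θ)) + (4 : ℝ) * (k) * (Real.sin ((d:ℝ)*θ)) + (-4 : ℝ) * (k) * (Real.cos θ) * (Real.sin ((d:ℝ)*θ)) + (-8 : ℝ) * (k) * (Real.cos θ)^2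 * (Real.sin ((d:ℝ)*θ)) + (8 : ℝ) * (k) * (Real.cos θ)^3 * (Real.sin ((d:ℝ)*θ)) + (-4 : ℝ) * (k) * (Real.sin θ) * (Real.cos ((d:ℝ)*θ)) + (8 : ℝ) * (k) * (Real.sin θ) * (Real.cos θ) * (Real.cos ((d:ℝ)*θ)) + (8 : ℝ) * (k) * (Real.sin θ)^2 * (Real.cos θ) * (Real.sin ((d:ℝ)*θ))) * e0 + ((-16 : ℝ) * (Real.cos θ) * (Real.sin ((d:ℝ)*θ)) * (V 0) + (16 : ℝ) * (Real.cos θ)^2 * (Real.sin ((d:ℝ)*θ)) * (V 0) + (16 : ℝ) * (k) * (Real.cos θ)^2 * (Real.sin ((d:ℝ)*θ)) * (V 0) + (4 : ℝ) * (k)^2 * (Real.cos θ) * (Real.sin ((d:ℝ)*θ)) * (V 0) + (4 : ℝ) * (k)^2 * (Real.cos θ)^2 * (Real.sin ((d:ℝ)*θ)) * (V 0)) * hpy + ((-16 : ℝ) * (Real.sin ((d:ℝ)*θ)) * (V 1) + (-16 : ℝ) * (Real.sin ((d:ℝ)*θ)) * (V 0) * (lam) + (-16 : ℝ) * (Real.cos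 θ) * (Real.sin ((d:ℝ)*θ)) * (V 2) + (-16 : ℝ) * (Real.cos θ) * (Real.sin ((d:ℝ)*θ)) * (V 0) + (16 : ℝ) * (Real.cos θ) * (Real.sin ((d:ℝ)*θ)) * (V 0) * (lam) + (32 : ℝ) * (Real.cos θ)^2 * (Real.sin ((d:ℝ)*θ)) * (V 1) + (16 : ℝ) * (Real.cos θ)^3 * (Real.sin ((d:ℝ)*θ)) * (V 0) + (16 : ℝ) * (Real.sin θ) * (Real.cos ((d:ℝ)*θ)) * (V 2) + (-16 : ℝ) * (Real.sin θ) * (Real.cos ((d:ℝ)*θ)) * (V 0) + (-16 : ℝ) * (Real.sin θ) * (Real.cos ((d:ℝ)*θ)) * (V 0) * (lam) + (-32 : ℝ) * (Real.sin θ) * (Real.cos θ) * (Real.cos ((d:ℝ)*θ)) * (V 1) + (16 : ℝ) * (Real.sin θ)^2 * (Real.cos θ) * (Real.sin ((d:ℝ)*θ)) * (V 0) + (8 : ℝ) * (k) * (Real.sin ((d:ℝ)*θ)) * (V 0) + (-16 : ℝ) * (k) * (Real.cos θ) * (Real.sin ((d:ℝ)*θ)) * (V 0) + (8 : ℝ)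 * (k) * (Real.cos θ)^3 * (Real.sin ((d:ℝ)*θ)) * (V 0) + (8 : ℝ) * (k) * (Real.sin θ)^2 * (Real.cos θ) * (Real.sin ((d:ℝ)*θ)) * (V 0)) * hlam' + (-16 : ℝ) * hH
end

section
/- Let d ≥ 5 be an integer and k ≥ 2 a real number, and let B be the (d+1) × (d+1) real matrix with rows and columns indexed by 0,…,d defined by: B(0,0) = 0, B(0,1) = 1; B(1,0) = k, B(1,1) = (3k−6)/4, B(1,2) = (k+2)/4; for 2 ≤ i ≤ d−1: B(i,i−1) = (k+2)/4, B(i,i) = (k−2)/2, B(i,i+1) = (k+2)/4; B(d,d−1) = (k+2)/4, B(d,d) = (3k−2)/4; and all other entries 0. Then every eigenvalue λ of B is real and satisfies −2 ≤ λ ≤ k; equivalently, |λ − (k−2)/2| ≤ (k+2)/2. -/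
/-!
Let `B = firstIntersectionMatrix d k` and `w = (k, 1, …, 1)`, the weights making `diag(w) B`
symmetric. For every complex vector `a = (a₀, …, a_d)`,

  `∑ wᵢ conj(aᵢ) ((k - B) a)ᵢ = |k a₀ - a₁|² + (k+2)/4 ∑_{1 ≤ i < d} |aᵢ - aᵢ₊₁|²`,
  `∑ wᵢ conj(aᵢ) ((B + 2) a)ᵢ = 2k |a₀ + a₁/2|² + (k+2)/4 ∑_{1 ≤ i < d} |aᵢ + aᵢ₊₁|² + (k+2)/2 |a_d|²`.

For an eigenvector `a` with eigenvalue `μ` the left-hand sides are `(k - μ) ‖a‖²_w` and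
`(μ + 2) ‖a‖²_w`, so `k - μ` and `μ + 2` are nonnegative real numbers.
-/

open Polynomial

open Finset Matrix ComplexConjugate ComplexOrder

section WeightedForm

variable {ι : Type*} [Fintype ι] {M : Matrix ι ι ℂ} {v : ι → ℂ} {μ c : ℂ} {w : ι → ℝ}

theorem exists_mulVec_eq_smul_of_isRoot_charpoly [DecidableEq ι] (h : M.charpoly.IsRoot μ) :
    ∃ v ≠ 0, M *ᵥ v = μ • v := by
  have hμ : Module.End.HasEigenvalue (toLin' M) μ :=
    Module.End.hasEigenvalue_iff_mem_spectrum.2 <| by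
      rwa [spectrum_toLin', mem_spectrum_iff_isRoot_charpoly]
  obtain ⟨v, hv⟩ := hμ.exists_hasEigenvector
  exact ⟨v, hv.2, by simpa using hv.apply_eq_smul⟩

-- In `ComplexOrder`, `μ ≤ c` says `μ.re ≤ c.re ∧ μ.im = c.im`.
theorem eigenvalue_le_of_weighted_form_nonneg (hv : v ≠ 0) (hMv : M *ᵥ v = μ • v)
    (hw : ∀ i, 0 < w i) (hc : 0 ≤ ∑ i, (w i : ℂ) * (conj (v i) * (c * v i - (M *ᵥ v) i))) :
    μ ≤ c := by
  have hnorm : 0 < ∑ i, (w i : ℂ) * (conj (v i) * v i) := by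
    obtain ⟨i, hi⟩ := Function.ne_iff.1 hv
    refine sum_pos' (fun j _ => mul_nonneg ?_ (star_mul_self_nonneg _)) ⟨i, mem_univ _, ?_⟩
    · exact_mod_cast (hw j).le
    · exact mul_pos (by exact_mod_cast hw i) (star_mul_self_pos (IsRegular.of_ne_zero hi))
  have hform : ∑ i, (w i : ℂ) * (conj (v i) * (c * v i - (M *ᵥ v) i)) =
      (c - μ) * ∑ i, (w i : ℂ) * (conj (v i) * v i) := by
    simp only [hMv, Pi.smul_apply, smul_eq_mul, mul_sum]
    exact sum_congr rfl fun i _ => by ring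
  rw [hform] at hc
  exact sub_nonneg.1 ((mul_le_mul_iff_left₀ hnorm).1 (by simpa using hc))

theorem le_eigenvalue_of_weighted_form_nonneg (hv : v ≠ 0) (hMv : M *ᵥ v = μ • v)
    (hw : ∀ i, 0 < w i) (hc : 0 ≤ ∑ i, (w i : ℂ) * (conj (v i) * ((M *ᵥ v) i - c * v i))) :
    c ≤ μ := by
  have hneg : (-M) *ᵥ v = (-μ) • v := by rw [neg_mulVec, hMv, neg_smul]
  refine neg_le_neg_iff.1 (eigenvalue_le_of_weighted_form_nonneg hv hneg hw ?_)
  simpa only [neg_mulVec, Pi.neg_apply, neg_mul, sub_neg_eq_add, neg_add_eq_sub] using hc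

end WeightedForm

-- The quadratic form of the signed Laplacian `D + εA` of the path `0 — 1 — ⋯ — m+1`.
theorem sum_conj_mul_signedPathLaplacian (b : ℕ → ℂ) {ε : ℂ} (hε : ε = 1 ∨ ε = -1) (m : ℕ) :
    conj (b 0) * (b 0 + ε * b 1)
      + ∑ i ∈ range m, conj (b (i + 1)) * (ε * b i + 2 * b (i + 1) + ε * b (i + 2))
      + conj (b (m + 1)) * (ε * b m + b (m + 1))
    = ∑ i ∈ range (m + 1), conj (b i + ε * b (i + 1)) * (b i + ε * b (i + 1)) := by
  obtain ⟨hconj, hsq⟩ : conj ε = ε ∧ ε ^ 2 = 1 := by rcases hε with rfl | rfl <;> norm_num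
  induction m with
  | zero =>
    simp only [zero_add, sum_range_zero, sum_range_one, map_add, map_mul, hconj]
    linear_combination -(conj (b 1) * b 1) * hsq
  | succ m ih =>
    rw [sum_range_succ, sum_range_succ _ (m + 1), ← ih, show m + 1 + 1 = m + 2 from rfl]
    simp only [map_add, map_mul, hconj]
    linear_combination -(conj (b (m + 2)) * b (m + 2)) * hsq

theorem sum_range_add_three {M : Type*} [AddCommMonoid M] (f : ℕ → M) (n : ℕ) :
    ∑ i ∈ range (n + 3), f i = f 0 + f 1 + ∑ i ∈ range n, f (i + 2) + f (n + 2) := by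
  rw [sum_range_succ, sum_range_succ', sum_range_succ']
  abel

-- The entries of `firstIntersectionMatrix d k`, indexed by `ℕ`; the two agree by `rfl`.
noncomputable def firstIntersectionEntry (d : ℕ) (k : ℝ) (i j : ℕ) : ℝ :=
  if i = 0 then (if j = 1 then 1 else 0)
  else if i = 1 then
    (if j = 0 then k
     else if j = 1 then (3 * k - 6) / 4
     else if j = 2 then (k + 2) / 4
     else 0)
  else if i = d then
    (if j = d - 1 then (k + 2) / 4
     else if j = d then (3 * k - 2) / 4
     else 0)
  else
    (if j + 1 = i then (k + 2) / 4
     else if j = i then (k - 2) / 2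
     else if j = i + 1 then (k + 2) / 4
     else 0)

noncomputable def firstIntersectionRow (d : ℕ) (k : ℝ) (a : ℕ → ℂ) (i : ℕ) : ℂ :=
  ∑ j ∈ range (d + 1), (firstIntersectionEntry d k i j : ℂ) * a j

def firstIntersectionWeight (k : ℝ) (i : ℕ) : ℝ := if i = 0 then k else 1

@[simp] theorem firstIntersectionWeight_zero (k : ℝ) : firstIntersectionWeight k 0 = k := rfl

@[simp] theorem firstIntersectionWeight_succ (k : ℝ) (i : ℕ) :
    firstIntersectionWeight k (i + 1) = 1 :=
  rfl

section FirstIntersectionMatrix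

variable (n : ℕ) (k : ℝ) (a : ℕ → ℂ)

theorem firstIntersectionRow_zero : firstIntersectionRow (n + 2) k a 0 = a 1 := by
  have h (j : ℕ) : (firstIntersectionEntry (n + 2) k 0 j : ℂ) = if j = 1 then 1 else 0 := by
    simp only [firstIntersectionEntry, if_true]
    split_ifs <;> simp
  simp only [firstIntersectionRow, h, ite_mul, one_mul, zero_mul, sum_ite_eq', mem_range]
  rw [if_pos (by omega)]

theorem firstIntersectionRow_one :
    firstIntersectionRow (n + 2) k a 1 = k * a 0 + (3 * k - 6) / 4 * a 1 + (k + 2) / 4 * a 2 := by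
  have h (j : ℕ) : (firstIntersectionEntry (n + 2) k 1 j : ℂ) =
      (if j = 0 then (k : ℂ) else 0) + (if j = 1 then (3 * (k : ℂ) - 6) / 4 else 0)
        + (if j = 2 then ((k : ℂ) + 2) / 4 else 0) := by
    simp only [firstIntersectionEntry, show 1 ≠ n + 2 by omega]
    split_ifs <;> first | contradiction | omega | (push_cast; ring)
  simp only [firstIntersectionRow, h, add_mul, ite_mul, zero_mul, sum_add_distrib, sum_ite_eq',
    mem_range]
  rw [if_pos (by omega), if_pos (by omega), if_pos (by omega)]

theorem firstIntersectionRow_add_two {i : ℕ} (hi : i < n) :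
    firstIntersectionRow (n + 2) k a (i + 2) =
      (k + 2) / 4 * a (i + 1) + (k - 2) / 2 * a (i + 2) + (k + 2) / 4 * a (i + 3) := by
  have h (j : ℕ) : (firstIntersectionEntry (n + 2) k (i + 2) j : ℂ) =
      (if j = i + 1 then ((k : ℂ) + 2) / 4 else 0) + (if j = i + 2 then ((k : ℂ) - 2) / 2 else 0)
        + (if j = i + 3 then ((k : ℂ) + 2) / 4 else 0) := by
    simp only [firstIntersectionEntry, show i + 2 ≠ 0 by omega, show i + 2 ≠ 1 by omega,
      show i + 2 ≠ n + 2 by omega, if_false]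
    split_ifs <;> first | contradiction | omega | (push_cast; ring)
  simp only [firstIntersectionRow, h, add_mul, ite_mul, zero_mul, sum_add_distrib, sum_ite_eq',
    mem_range]
  rw [if_pos (by omega), if_pos (by omega), if_pos (by omega)]

theorem firstIntersectionRow_last :
    firstIntersectionRow (n + 2) k a (n + 2) =
      (k + 2) / 4 * a (n + 1) + (3 * k - 2) / 4 * a (n + 2) := by
  have h (j : ℕ) : (firstIntersectionEntry (n + 2) k (n + 2) j : ℂ) =
      (if j = n + 1 then ((k : ℂ) + 2) / 4 else 0)
        + (if j = n + 2 then (3 * (k : ℂ) - 2) / 4 else 0) := by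
    simp only [firstIntersectionEntry, show n + 2 ≠ 0 by omega, show n + 2 ≠ 1 by omega, if_true,
      if_false]
    split_ifs <;> first | contradiction | omega | (push_cast; ring)
  simp only [firstIntersectionRow, h, add_mul, ite_mul, zero_mul, sum_add_distrib, sum_ite_eq',
    mem_range]
  rw [if_pos (by omega), if_pos (by omega)]

theorem sum_firstIntersectionMatrix_mulVec (g : ℕ → ℂ → ℂ) :
    ∑ i : Fin (n + 3), g i (((firstIntersectionMatrix (n + 2) k).map Complex.ofReal *ᵥ
        fun j => a j) i) =
      g 0 (a 1) + g 1 (k * a 0 + (3 * k - 6) / 4 * a 1 + (k + 2) / 4 * a 2)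
        + ∑ i ∈ range n,
            g (i + 2) ((k + 2) / 4 * a (i + 1) + (k - 2) / 2 * a (i + 2) + (k + 2) / 4 * a (i + 3))
        + g (n + 2) ((k + 2) / 4 * a (n + 1) + (3 * k - 2) / 4 * a (n + 2)) := by
  have hrow (i : Fin (n + 3)) : ((firstIntersectionMatrix (n + 2) k).map Complex.ofReal *ᵥ
      fun j => a j) i = firstIntersectionRow (n + 2) k a i :=
    Fin.sum_univ_eq_sum_range (fun j => (firstIntersectionEntry (n + 2) k i j : ℂ) * a j) _
  simp only [hrow]
  rw [Fin.sum_univ_eq_sum_range (fun i => g i (firstIntersectionRow (n + 2) k a i)),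
    sum_range_add_three, firstIntersectionRow_zero, firstIntersectionRow_one,
    firstIntersectionRow_last,
    sum_congr rfl fun i hi => by rw [firstIntersectionRow_add_two n k a (mem_range.1 hi)]]

theorem firstIntersection_form_sub_eq :
    ∑ i : Fin (n + 3), (firstIntersectionWeight k i : ℂ) *
        (conj (a i) * (k * a i - ((firstIntersectionMatrix (n + 2) k).map Complex.ofReal *ᵥ
          fun j => a j) i)) =
      conj (k * a 0 - a 1) * (k * a 0 - a 1)
        + (k + 2) / 4 *
          ∑ i ∈ range (n + 1), conj (a (i + 1) - a (i + 2)) * (a (i + 1) - a (i + 2)) := by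
  have hpath : conj (a 1) * (a 1 - a 2)
      + ∑ i ∈ range n, conj (a (i + 2)) * (-a (i + 1) + 2 * a (i + 2) - a (i + 3))
      + conj (a (n + 2)) * (-a (n + 1) + a (n + 2))
      = ∑ i ∈ range (n + 1), conj (a (i + 1) - a (i + 2)) * (a (i + 1) - a (i + 2)) := by
    simpa [sub_eq_add_neg] using
      sum_conj_mul_signedPathLaplacian (fun i => a (i + 1)) (Or.inr rfl) n
  have hmid : ∑ i ∈ range n, conj (a (i + 2)) * (k * a (i + 2)
        - ((k + 2) / 4 * a (i + 1) + (k - 2) / 2 * a (i + 2) + (k + 2) / 4 * a (i + 3)))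
      = (k + 2) / 4 *
          ∑ i ∈ range n, conj (a (i + 2)) * (-a (i + 1) + 2 * a (i + 2) - a (i + 3)) := by
    rw [mul_sum]
    exact sum_congr rfl fun i _ => by ring
  rw [sum_firstIntersectionMatrix_mulVec n k a
    (fun i r => (firstIntersectionWeight k i : ℂ) * (conj (a i) * (k * a i - r))), ← hpath]
  simp only [firstIntersectionWeight_zero, firstIntersectionWeight_succ, Complex.ofReal_one,
    one_mul, map_sub, map_mul, Complex.conj_ofReal]
  linear_combination hmid

theorem firstIntersection_form_add_eq :
    ∑ i : Fin (n + 3), (firstIntersectionWeight k i : ℂ) *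
        (conj (a i) * (((firstIntersectionMatrix (n + 2) k).map Complex.ofReal *ᵥ
          fun j => a j) i - -2 * a i)) =
      2 * k * (conj (a 0 + a 1 / 2) * (a 0 + a 1 / 2))
        + (k + 2) / 4 *
          ∑ i ∈ range (n + 1), conj (a (i + 1) + a (i + 2)) * (a (i + 1) + a (i + 2))
        + (k + 2) / 2 * (conj (a (n + 2)) * a (n + 2)) := by
  have hpath : conj (a 1) * (a 1 + a 2)
      + ∑ i ∈ range n, conj (a (i + 2)) * (a (i + 1) + 2 * a (i + 2) + a (i + 3))
      + conj (a (n + 2)) * (a (n + 1) + a (n + 2))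
      = ∑ i ∈ range (n + 1), conj (a (i + 1) + a (i + 2)) * (a (i + 1) + a (i + 2)) := by
    simpa using sum_conj_mul_signedPathLaplacian (fun i => a (i + 1)) (Or.inl rfl) n
  have hmid : ∑ i ∈ range n, conj (a (i + 2)) * ((k + 2) / 4 * a (i + 1)
        + (k - 2) / 2 * a (i + 2) + (k + 2) / 4 * a (i + 3) - -2 * a (i + 2))
      = (k + 2) / 4 *
          ∑ i ∈ range n, conj (a (i + 2)) * (a (i + 1) + 2 * a (i + 2) + a (i + 3)) := by
    rw [mul_sum]
    exact sum_congr rfl fun i _ => by ring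
  rw [sum_firstIntersectionMatrix_mulVec n k a
    (fun i r => (firstIntersectionWeight k i : ℂ) * (conj (a i) * (r - -2 * a i))), ← hpath]
  simp only [firstIntersectionWeight_zero, firstIntersectionWeight_succ, Complex.ofReal_one,
    one_mul, map_add, map_div₀, map_ofNat]
  linear_combination hmid

theorem firstIntersection_form_sub_nonneg (hk : -2 ≤ k) :
    0 ≤ ∑ i : Fin (n + 3), (firstIntersectionWeight k i : ℂ) *
        (conj (a i) * (k * a i - ((firstIntersectionMatrix (n + 2) k).map Complex.ofReal *ᵥ
          fun j => a j) i)) := by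
  have hβ : (0 : ℂ) ≤ (k + 2) / 4 := by exact_mod_cast (by linarith : (0 : ℝ) ≤ (k + 2) / 4)
  rw [firstIntersection_form_sub_eq]
  exact add_nonneg (star_mul_self_nonneg _)
    (mul_nonneg hβ (sum_nonneg fun i _ => star_mul_self_nonneg _))

theorem firstIntersection_form_add_nonneg (hk : 0 ≤ k) :
    0 ≤ ∑ i : Fin (n + 3), (firstIntersectionWeight k i : ℂ) *
        (conj (a i) * (((firstIntersectionMatrix (n + 2) k).map Complex.ofReal *ᵥ
          fun j => a j) i - -2 * a i)) := by
  have h2k : (0 : ℂ) ≤ 2 * k := by exact_mod_cast (by linarith : (0 : ℝ) ≤ 2 * k)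
  have hβ : (0 : ℂ) ≤ (k + 2) / 4 := by exact_mod_cast (by linarith : (0 : ℝ) ≤ (k + 2) / 4)
  have hβ' : (0 : ℂ) ≤ (k + 2) / 2 := by exact_mod_cast (by linarith : (0 : ℝ) ≤ (k + 2) / 2)
  rw [firstIntersection_form_add_eq]
  exact add_nonneg (add_nonneg (mul_nonneg h2k (star_mul_self_nonneg _))
    (mul_nonneg hβ (sum_nonneg fun i _ => star_mul_self_nonneg _)))
    (mul_nonneg hβ' (star_mul_self_nonneg _))

end FirstIntersectionMatrix

/-- Every eigenvalue of the first intersection matrix is real and lies in the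
interval `[-2, k]`, i.e. satisfies `|λ − (k−2)/2| ≤ (k+2)/2`. -/
theorem eigenvalues_firstIntersectionMatrix_real_and_bounded (d : ℕ) (hd : 5 ≤ d)
    (k : ℝ) (hk : 2 ≤ k) (mu : ℂ)
    (hmu : ((firstIntersectionMatrix d k).map (Complex.ofReal)).charpoly.IsRoot mu) :
    mu.im = 0 ∧ -2 ≤ mu.re ∧ mu.re ≤ k ∧ |mu.re - (k - 2) / 2| ≤ (k + 2) / 2 := by
  obtain ⟨n, rfl⟩ : ∃ n, d = n + 2 := ⟨d - 2, by omega⟩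
  obtain ⟨v, hv, hmv⟩ := exists_mulVec_eq_smul_of_isRoot_charpoly hmu
  obtain ⟨a, rfl⟩ : ∃ a : ℕ → ℂ, v = fun i : Fin (n + 3) => a i :=
    ⟨fun m => if h : m < n + 3 then v ⟨m, h⟩ else 0, funext fun i => by simp [i.isLt]⟩
  have hw (i : Fin (n + 3)) : 0 < firstIntersectionWeight k i := by
    unfold firstIntersectionWeight
    split_ifs <;> linarith
  have hle : mu ≤ k := eigenvalue_le_of_weighted_form_nonneg hv hmv hw
    (firstIntersection_form_sub_nonneg n k a (by linarith))
  have hge : -2 ≤ mu := le_eigenvalue_of_weighted_form_nonneg hv hmv hw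
    (firstIntersection_form_add_nonneg n k a (by linarith))
  obtain ⟨hre_le, him⟩ := Complex.le_def.1 hle
  obtain ⟨hre_ge, -⟩ := Complex.le_def.1 hge
  simp only [Complex.ofReal_re, Complex.ofReal_im, Complex.neg_re, Complex.re_ofNat]
    at hre_le him hre_ge
  exact ⟨him, hre_ge, hre_le, abs_le.2 ⟨by linarith, by linarith⟩⟩
end
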